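/- The symmetric difference of the sets I_1, I_2, ..., I_{k-1} equals I_k; equivalently, over GF(2), the sum of the indicator vectors (in GF(2)^{k(k-1)/2}) of I_1 through I_{k-1} equals the indicator vector of I_k. -/

import Mathlib

/-!
Number the pairs `a < b` of `[k]` row by row: `pairIndex k a b = (a-1)k + (b-a) - a(a-1)/2`,
row `a` occupying the `k - a` indices that follow the `(a-1)k - a(a-1)/2` indices of the earlier
rows. This numbering is injective, and `I_l` is exactly the set of indices of the pairs containing
`l`. Hence every index lies in exactly two of `I_1, …, I_k` or in none, so over GF(2) the
indicator vectors of all `k` sets sum to zero, and that of `I_k` is the sum of the others.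
-/

open Finset

/-- `p¹_l(a) = (l-1)k + (a - l(l-1)/2)` -/
def pOne (k l a : ℕ) : ℕ := (l - 1) * k + a - l * (l - 1) / 2

/-- `p²_l(a) = (a-1)k + (l - a(a+1)/2)` -/
def pTwo (k l a : ℕ) : ℕ := (a - 1) * k + l - a * (a + 1) / 2

/-- `I¹_l` : first-type packet indices of group `l` -/
def I1 (k l : ℕ) : Finset ℕ := (Finset.Icc 1 (k - l)).image (pOne k l)

/-- `I²_l` : second-type packet indices of group `l` -/
def I2 (k l : ℕ) : Finset ℕ := (Finset.Icc 1 (l - 1)).image (pTwo k l)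

/-- `I_l = I¹_l ∪ I²_l` -/
def Igrp (k l : ℕ) : Finset ℕ := I1 k l ∪ I2 k l

def pairIndex (k a b : ℕ) : ℕ := (a - 1) * k + (b - a) - a * (a - 1) / 2

lemma pOne_eq_pairIndex (k l a : ℕ) : pOne k l a = pairIndex k l (l + a) := by
  simp only [pOne, pairIndex, Nat.add_sub_cancel_left]

lemma pTwo_eq_pairIndex {k l a : ℕ} (hal : a ≤ l) : pTwo k l a = pairIndex k a l := by
  have htri : a * (a + 1) / 2 = a * (a - 1) / 2 + a := by
    simpa [mul_comm] using Nat.triangle_succ a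
  rw [pTwo, pairIndex, htri, add_comm _ a, ← Nat.sub_sub, Nat.add_sub_assoc hal]

lemma two_mul_pairIndex_add {k a b : ℕ} (hak : a ≤ k) :
    2 * pairIndex k a b + a * (a - 1) = 2 * ((a - 1) * k + (b - a)) := by
  have htwo : 2 * (a * (a - 1) / 2) = a * (a - 1) :=
    Nat.two_mul_div_two_of_even (Nat.even_mul_pred_self a)
  have hle : a * (a - 1) ≤ 2 * ((a - 1) * k) := by
    calc a * (a - 1) ≤ (2 * k) * (a - 1) := Nat.mul_le_mul_right _ (by omega)
      _ = 2 * ((a - 1) * k) := by ring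
  rw [pairIndex]
  omega

lemma pairIndex_lt_pairIndex {k a b a' b' : ℕ} (ha : 1 ≤ a) (hab : a < b) (hbk : b ≤ k)
    (haa' : a < a') (hab' : a' < b') (hbk' : b' ≤ k) : pairIndex k a b < pairIndex k a' b' := by
  have e := two_mul_pairIndex_add (b := b) (show a ≤ k by omega)
  have e' := two_mul_pairIndex_add (b := b') (show a' ≤ k by omega)
  zify [ha, hab.le, hab'.le, show 1 ≤ a' by omega] at e e'
  have hprod : (0 : ℤ) ≤ ((a' : ℤ) - a - 1) * ((k : ℤ) - a' - 1) :=
    mul_nonneg (by omega) (by omega)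
  have : (pairIndex k a b : ℤ) < pairIndex k a' b' := by nlinarith
  exact_mod_cast this

lemma pairIndex_inj {k a b a' b' : ℕ} (ha : 1 ≤ a) (hab : a < b) (hbk : b ≤ k)
    (ha' : 1 ≤ a') (hab' : a' < b') (hbk' : b' ≤ k)
    (h : pairIndex k a b = pairIndex k a' b') : a = a' ∧ b = b' := by
  obtain hlt | rfl | hgt := lt_trichotomy a a'
  · exact absurd h (pairIndex_lt_pairIndex ha hab hbk hlt hab' hbk').ne
  · have e := two_mul_pairIndex_add (b := b) (show a ≤ k by omega)
    have e' := two_mul_pairIndex_add (b := b') (show a ≤ k by omega)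
    rw [h] at e
    exact ⟨rfl, by omega⟩
  · exact absurd h (pairIndex_lt_pairIndex ha' hab' hbk' hgt hab hbk).ne'

lemma mem_Igrp_iff {k l i : ℕ} (hl : l ∈ Icc 1 k) :
    i ∈ Igrp k l ↔
      ∃ a b, 1 ≤ a ∧ a < b ∧ b ≤ k ∧ (a = l ∨ b = l) ∧ pairIndex k a b = i := by
  rw [mem_Icc] at hl
  simp only [Igrp, mem_union, I1, I2, mem_image, mem_Icc]
  constructor
  · rintro (⟨c, hc, rfl⟩ | ⟨a, ha, rfl⟩)
    · exact ⟨l, l + c, hl.1, by omega, by omega, .inl rfl, (pOne_eq_pairIndex k l c).symm⟩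
    · exact ⟨a, l, ha.1, by omega, hl.2, .inr rfl, (pTwo_eq_pairIndex (by omega)).symm⟩
  · rintro ⟨a, b, ha, hab, hbk, rfl | rfl, rfl⟩
    · refine .inl ⟨b - a, by omega, ?_⟩
      rw [pOne_eq_pairIndex, Nat.add_sub_cancel' hab.le]
    · exact .inr ⟨a, by omega, pTwo_eq_pairIndex hab.le⟩

lemma filter_mem_Igrp_of_pair {k a b : ℕ} (ha : 1 ≤ a) (hab : a < b) (hbk : b ≤ k) :
    {l ∈ Icc 1 k | pairIndex k a b ∈ Igrp k l} = {a, b} := by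
  ext l
  rw [mem_filter, mem_insert, mem_singleton]
  constructor
  · rintro ⟨hl, hmem⟩
    obtain ⟨a', b', ha', hab', hbk', hl', heq⟩ := (mem_Igrp_iff hl).1 hmem
    obtain ⟨rfl, rfl⟩ := pairIndex_inj ha' hab' hbk' ha hab hbk heq
    omega
  · intro hl
    have hl' : l ∈ Icc 1 k := mem_Icc.2 (by omega)
    exact ⟨hl', (mem_Igrp_iff hl').2 ⟨a, b, ha, hab, hbk, by omega, rfl⟩⟩

lemma even_card_filter_mem_Igrp (k i : ℕ) : Even #{l ∈ Icc 1 k | i ∈ Igrp k l} := by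
  by_cases hi : ∃ a b, 1 ≤ a ∧ a < b ∧ b ≤ k ∧ pairIndex k a b = i
  · obtain ⟨a, b, ha, hab, hbk, rfl⟩ := hi
    rw [filter_mem_Igrp_of_pair ha hab hbk, card_pair hab.ne]
    exact even_two
  · rw [filter_eq_empty_iff.2 ?_, card_empty]
    · exact ⟨0, rfl⟩
    intro l hl hmem
    obtain ⟨a, b, ha, hab, hbk, -, heq⟩ := (mem_Igrp_iff hl).1 hmem
    exact hi ⟨a, b, ha, hab, hbk, heq⟩

lemma sum_indicator_Igrp_eq_zero (k i : ℕ) :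
    (∑ l ∈ Icc 1 k, if i ∈ Igrp k l then (1 : ZMod 2) else 0) = 0 := by
  rw [sum_boole, ZMod.natCast_eq_zero_iff_even]
  exact even_card_filter_mem_Igrp k i

/-- Over GF(2), the sum of the indicator vectors of `I_1,…,I_{k-1}` equals the
indicator vector of `I_k` (the symmetric difference of `I_1,…,I_{k-1}` is `I_k`). -/
theorem Igrp_indicator_sum (k : ℕ) (hk : 2 ≤ k) :
    ∀ i : ℕ,
      (∑ l ∈ Finset.Icc 1 (k - 1), if i ∈ Igrp k l then (1 : ZMod 2) else 0) =
        if i ∈ Igrp k k then (1 : ZMod 2) else 0 := by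
  intro i
  obtain ⟨m, rfl⟩ : ∃ m, k = m + 1 := ⟨k - 1, by omega⟩
  have hsum := sum_indicator_Igrp_eq_zero (m + 1) i
  rw [← insert_Icc_right_eq_Icc_add_one (by omega), sum_insert (by simp),
    CharTwo.add_eq_zero] at hsum
  simpa using hsum.symm
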